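/- arXiv:2304.02230 — 6 statements merged into one kernel-verified Lean document; each statement's English description precedes it below -/
import Mathlib

section
/- Let m ≥ 3 be odd and Γ = K_{m−1} ⊔ m·K_1 (the disjoint union of a complete graph on m−1 vertices and m isolated vertices). Then M1(Γ) = (m−1)(m−2)^2, M2(Γ) = (m−1)(m−2)^3/2, and M2(Γ)/|e(Γ)| > M1(Γ)/|v(Γ)|. -/
open Finset

/-- First Zagreb index: sum of squared degrees. -/
def zagrebM1 (V : Type*) [Fintype V] (G : SimpleGraph V) [DecidableRel G.Adj] : ℕ :=
  ∑ v, G.degree v ^ 2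

/-- Second Zagreb index: sum over edges of the product of endpoint degrees. -/
def zagrebM2 (V : Type*) [Fintype V] (G : SimpleGraph V) [DecidableRel G.Adj] : ℕ :=
  ∑ e ∈ G.edgeFinset,
    Sym2.lift ⟨fun u v => G.degree u * G.degree v, fun u v => mul_comm _ _⟩ e

/-- Disjoint union of complete graphs of sizes `m i`, one for each `i : ι`. -/
def cliqueUnion {ι : Type*} (m : ι → ℕ) : SimpleGraph (Σ i, Fin (m i)) where
  Adj x y := x.1 = y.1 ∧ x ≠ y
  symm := ⟨fun _ _ h => ⟨h.1.symm, h.2.symm⟩⟩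
  loopless := ⟨fun _ h => h.2 rfl⟩

instance cliqueUnion.adjDecidable {ι : Type*} [DecidableEq ι] (m : ι → ℕ) :
    DecidableRel (cliqueUnion m).Adj :=
  fun x y => inferInstanceAs (Decidable (x.1 = y.1 ∧ x ≠ y))

abbrev DOddV (m : ℕ) : Type :=
  Σ i : Unit ⊕ Fin m, Fin (Sum.elim (fun _ : Unit => m - 1) (fun _ : Fin m => 1) i)

abbrev DOddG (m : ℕ) : SimpleGraph (DOddV m) :=
  cliqueUnion (Sum.elim (fun _ : Unit => m - 1) (fun _ : Fin m => 1))

lemma cliqueUnion_degree {ι : Type*} [DecidableEq ι] [Fintype ι] (m : ι → ℕ)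
    (v : Σ i, Fin (m i)) :
    (cliqueUnion m).degree v = m v.1 - 1 := by
  have h : (cliqueUnion m).neighborFinset v =
      (Finset.univ.map ⟨Sigma.mk v.1, sigma_mk_injective⟩).erase v := by
    ext w
    simp only [SimpleGraph.mem_neighborFinset, Finset.mem_erase, Finset.mem_map,
      Finset.mem_univ, Function.Embedding.coeFn_mk, true_and]
    constructor
    · rintro ⟨h1, h2⟩
      obtain ⟨i, a⟩ := w
      cases h1
      exact ⟨fun e => h2 e.symm, a, rfl⟩
    · rintro ⟨hne, a, rfl⟩
      exact ⟨rfl, fun e => hne e.symm⟩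
  rw [← SimpleGraph.card_neighborFinset_eq_degree, h, Finset.card_erase_of_mem,
    Finset.card_map, Finset.card_univ, Fintype.card_fin]
  simp only [Finset.mem_map, Finset.mem_univ, Function.Embedding.coeFn_mk, true_and]
  exact ⟨v.2, Sigma.eta v⟩

lemma DOdd_degree (k : ℕ) (v : DOddV (k + 3)) :
    (DOddG (k + 3)).degree v = Sum.elim (fun _ : Unit => k + 1) (fun _ : Fin (k + 3) => 0) v.1 := by
  rw [cliqueUnion_degree]
  rcases v with ⟨i | j, a⟩ <;> simp

lemma DOdd_fst_eq_inl (k : ℕ) {u v : DOddV (k + 3)} (h : (DOddG (k + 3)).Adj u v) :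
    u.1 = Sum.inl () ∧ v.1 = Sum.inl () := by
  obtain ⟨h1, h2⟩ := h
  obtain ⟨i, a⟩ := u
  obtain ⟨j, b⟩ := v
  dsimp at h1
  subst h1
  rcases i with i | j
  · exact ⟨rfl, rfl⟩
  · have hab : a = b := by
      have ha := a.2; have hb := b.2
      simp only [Sum.elim_inr] at ha hb
      exact Fin.ext (by omega)
    exact (h2 (by rw [hab])).elim

lemma DOdd_M1 (k : ℕ) : zagrebM1 (DOddV (k + 3)) (DOddG (k + 3)) = (k + 2) * (k + 1) ^ 2 := by
  unfold zagrebM1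
  simp_rw [DOdd_degree]
  rw [← Finset.univ_sigma_univ, Finset.sum_sigma, Fintype.sum_sum_type]
  simp [mul_comm]
  exact (Finset.card_univ).trans (Fintype.card_fin _)

lemma DOdd_degsum (k : ℕ) : ∑ v, (DOddG (k + 3)).degree v = (k + 2) * (k + 1) := by
  simp_rw [DOdd_degree]
  rw [← Finset.univ_sigma_univ, Finset.sum_sigma, Fintype.sum_sum_type]
  simp [mul_comm]
  exact (Finset.card_univ).trans (Fintype.card_fin _)

lemma DOdd_edges (k : ℕ) : 2 * (DOddG (k + 3)).edgeFinset.card = (k + 2) * (k + 1) := by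
  rw [← SimpleGraph.sum_degrees_eq_twice_card_edges, DOdd_degsum]

lemma DOdd_M2 (k : ℕ) :
    zagrebM2 (DOddV (k + 3)) (DOddG (k + 3)) =
      (DOddG (k + 3)).edgeFinset.card * (k + 1) ^ 2 := by
  unfold zagrebM2
  have h : ∀ e ∈ (DOddG (k + 3)).edgeFinset,
      Sym2.lift ⟨fun u v => (DOddG (k + 3)).degree u * (DOddG (k + 3)).degree v,
        fun u v => mul_comm _ _⟩ e = (k + 1) ^ 2 := by
    intro e he
    induction e using Sym2.ind with
    | _ u v =>
      rw [SimpleGraph.mem_edgeFinset, SimpleGraph.mem_edgeSet] at he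
      obtain ⟨hu, hv⟩ := DOdd_fst_eq_inl k he
      rw [Sym2.lift_mk]
      change (DOddG (k + 3)).degree u * (DOddG (k + 3)).degree v = (k + 1) ^ 2
      rw [DOdd_degree, DOdd_degree, hu, hv]
      simp [sq]
  rw [Finset.sum_congr rfl h, Finset.sum_const, smul_eq_mul]

set_option maxHeartbeats 1000000 in
theorem zagreb_commuting_dihedral_odd (m : ℕ) (hm : 3 ≤ m) (hodd : Odd m) :
    (zagrebM1 (DOddV m) (DOddG m) : ℚ) = ((m : ℚ) - 1) * ((m : ℚ) - 2) ^ 2 ∧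
    (zagrebM2 (DOddV m) (DOddG m) : ℚ) = ((m : ℚ) - 1) * ((m : ℚ) - 2) ^ 3 / 2 ∧
    (zagrebM2 (DOddV m) (DOddG m) : ℚ) / ((DOddG m).edgeFinset.card : ℚ)
      > (zagrebM1 (DOddV m) (DOddG m) : ℚ) / (Fintype.card (DOddV m) : ℚ) := by
  obtain ⟨k, rfl⟩ : ∃ k, m = k + 3 := ⟨m - 3, by omega⟩
  have hM1 := DOdd_M1 k
  have hM2 := DOdd_M2 k
  have hE := DOdd_edges k
  have hVn : Fintype.card (DOddV (k + 3)) = 2 * k + 5 := by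
    simp [Fintype.card_sigma, Fintype.sum_sum_type]
    omega
  rw [hM1, hM2, hVn]
  generalize hEdef : (DOddG (k + 3)).edgeFinset.card = E at hE ⊢
  have hEpos : 0 < E := by nlinarith
  have hEQ : (2 : ℚ) * E = ((k : ℚ) + 2) * ((k : ℚ) + 1) := by exact_mod_cast hE
  have hEposQ : (0 : ℚ) < E := by exact_mod_cast hEpos
  refine ⟨?_, ?_, ?_⟩
  · push_cast; ring
  · push_cast
    rw [eq_div_iff (two_ne_zero)]
    linear_combination ((k : ℚ) + 1) ^ 2 * hEQ
  · have hVpos : (0 : ℚ) < ((2 * k + 5 : ℕ) : ℚ) := by positivity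
    rw [gt_iff_lt, div_lt_div_iff₀ hVpos hEposQ]
    push_cast
    have key : (0 : ℚ) < (E : ℚ) * ((k : ℚ) + 1) ^ 2 * ((k : ℚ) + 3) :=
      mul_pos (mul_pos hEposQ (by positivity)) (by positivity)
    have expand : (E : ℚ) * ((k : ℚ) + 1) ^ 2 * (2 * (k : ℚ) + 5)
        - ((k : ℚ) + 2) * ((k : ℚ) + 1) ^ 2 * (E : ℚ)
        = (E : ℚ) * ((k : ℚ) + 1) ^ 2 * ((k : ℚ) + 3) := by ring
    linarith [key, expand]
end

section
/- Let m ≥ 3 be odd and let Γ be the complement of K_{m−1} ⊔ m·K_1 on 2m−1 vertices. Then M1(Γ) = m(m−1)(5m−4), M2(Γ) = m(m−1)(4m^2−6m+2), |e(Γ)| = 3m(m−1)/2, and M2(Γ)/|e(Γ)| > M1(Γ)/|v(Γ)|. -/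
open Finset

lemma adj_iff (m : ℕ) (x y : DOddV m) : (DOddG m)ᶜ.Adj x y ↔ x.1 ≠ y.1 := by
  simp only [SimpleGraph.compl_adj, cliqueUnion, ne_eq, not_and, not_not]
  constructor
  · rintro ⟨hxy, h⟩ h1
    exact hxy (h h1)
  · intro h
    exact ⟨fun e => h (congrArg Sigma.fst e), fun h1 => absurd h1 h⟩

lemma sumL {M : Type*} [AddCommMonoid M] (m : ℕ) (g : (Unit ⊕ Fin m) → M) :
    ∑ v : DOddV m, g v.1 = (m-1) • g (Sum.inl ()) + ∑ i : Fin m, g (Sum.inr i) := by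
  rw [← Finset.univ_sigma_univ, Finset.sum_sigma, Fintype.sum_sum_type]
  simp only [Finset.sum_const, Finset.card_univ, Fintype.card_fin]
  simp [Finset.sum_const]

def D (m : ℕ) : (Unit ⊕ Fin m) → ℕ := Sum.elim (fun _ => m) (fun _ => 2*m-2)

lemma deg_eq (m : ℕ) (v : DOddV m) : (DOddG m)ᶜ.degree v = D m v.1 := by
  rw [SimpleGraph.degree, SimpleGraph.neighborFinset_eq_filter, Finset.card_filter]
  have h : ∀ u : DOddV m, (if (DOddG m)ᶜ.Adj v u then 1 else 0)
      = (fun i => if v.1 ≠ i then (1:ℕ) else 0) u.1 := fun u => by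
    rw [if_congr (adj_iff m v u) rfl rfl]
  rw [Finset.sum_congr rfl (fun u _ => h u),
    sumL m (fun i => if v.1 ≠ i then (1:ℕ) else 0)]
  rcases v with ⟨i | j, x⟩
  · simp [D]
  · simp only [D, Sum.elim_inr, ne_eq, Sum.inr.injEq, reduceCtorEq, not_false_iff,
      if_true, smul_eq_mul, mul_one]
    have : (∑ x : Fin m, if ¬j = x then (1:ℕ) else 0) = m - 1 := by
      rw [← Finset.card_filter]
      simp [Finset.filter_ne, Finset.card_erase_of_mem]
    omega

lemma sum_edge_lift {V : Type*} [Fintype V] [DecidableEq V] (G : SimpleGraph V)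
    [DecidableRel G.Adj] (f : V → V → ℕ) (hf : ∀ u v, f u v = f v u) :
    2 * ∑ e ∈ G.edgeFinset, Sym2.lift ⟨f, hf⟩ e
      = ∑ v, ∑ u ∈ G.neighborFinset v, f v u := by
  have key : ∑ d : G.Dart, f d.fst d.snd
      = 2 * ∑ e ∈ G.edgeFinset, Sym2.lift ⟨f, hf⟩ e := by
    have h1 : ∀ d : G.Dart, f d.fst d.snd = Sym2.lift ⟨f, hf⟩ d.edge := fun d => by
      obtain ⟨⟨a, b⟩, hab⟩ := d
      simp [SimpleGraph.Dart.edge]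
    rw [Finset.sum_congr rfl (fun d _ => h1 d)]
    rw [← Finset.sum_fiberwise_of_maps_to (g := fun d : G.Dart => d.edge) (t := G.edgeFinset)
      (fun d _ => by rw [SimpleGraph.mem_edgeFinset]; exact d.edge_mem)]
    rw [Finset.mul_sum]
    refine Finset.sum_congr rfl fun e he => ?_
    rw [Finset.sum_congr rfl (fun d hd => by
      rw [(Finset.mem_filter.mp hd).2]), Finset.sum_const,
      G.dart_edge_fiber_card e (SimpleGraph.mem_edgeFinset.mp he)]
    simp [mul_comm]
  rw [← key]
  rw [← Finset.sum_fiberwise_of_maps_to (g := fun d : G.Dart => d.fst)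
      (fun d _ => Finset.mem_univ (α := V) _)]
  refine Finset.sum_congr rfl fun v _ => ?_
  rw [SimpleGraph.dart_fst_fiber, Finset.sum_image
    (fun a _ b _ h => G.dartOfNeighborSet_injective v h)]
  rw [SimpleGraph.neighborFinset_def, ← Finset.sum_set_coe]
  refine Finset.sum_congr rfl fun a _ => ?_
  simp [SimpleGraph.dartOfNeighborSet]

lemma card_nat (m : ℕ) : Fintype.card (DOddV m) = (m - 1) + m := by
  simp [DOddV, Fintype.card_sigma, Fintype.sum_sum_type]

lemma M1_nat (m : ℕ) :
    zagrebM1 (DOddV m) (DOddG m)ᶜ = (m-1) * m^2 + m * (2*m-2)^2 := by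
  rw [zagrebM1]
  have h : ∀ v : DOddV m, (DOddG m)ᶜ.degree v ^ 2 = (fun i => D m i ^ 2) v.1 :=
    fun v => by rw [deg_eq]
  rw [Finset.sum_congr rfl (fun v _ => h v), sumL m (fun i => D m i ^ 2)]
  simp [D, mul_comm]

lemma edge_nat (m : ℕ) :
    2 * (DOddG m)ᶜ.edgeFinset.card = (m-1) * m + m * (2*m-2) := by
  rw [← SimpleGraph.sum_degrees_eq_twice_card_edges]
  have h : ∀ v : DOddV m, (DOddG m)ᶜ.degree v = (fun i => D m i) v.1 :=
    fun v => by rw [deg_eq]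
  rw [Finset.sum_congr rfl (fun v _ => h v), sumL m (fun i => D m i)]
  simp [D, mul_comm]

lemma M2_nat (m : ℕ) :
    2 * zagrebM2 (DOddV m) (DOddG m)ᶜ
      = (m-1) * (m * ((2*m-2) * m)) + m * ((m-1) * (m * (2*m-2)) + (m-1) * ((2*m-2) * (2*m-2))) := by
  rw [zagrebM2, sum_edge_lift]
  have h : ∀ v : DOddV m,
      ∑ u ∈ (DOddG m)ᶜ.neighborFinset v, (DOddG m)ᶜ.degree v * (DOddG m)ᶜ.degree u
      = (fun i => ∑ u : DOddV m,
          (fun i' => if i ≠ i' then D m i * D m i' else 0) u.1) v.1 := by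
    intro v
    rw [SimpleGraph.neighborFinset_eq_filter, Finset.sum_filter]
    refine Finset.sum_congr rfl fun u _ => ?_
    rw [deg_eq, deg_eq, if_congr (adj_iff m v u) rfl rfl]
  rw [Finset.sum_congr rfl (fun v _ => h v),
    sumL m (fun i => ∑ u : DOddV m, (fun i' => if i ≠ i' then D m i * D m i' else 0) u.1)]
  have hinner : ∀ i : Unit ⊕ Fin m,
      (∑ u : DOddV m, (fun i' => if i ≠ i' then D m i * D m i' else 0) u.1)
      = (m-1) • (if i ≠ Sum.inl () then D m i * D m (Sum.inl ()) else 0)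
        + ∑ j : Fin m, (if i ≠ Sum.inr j then D m i * D m (Sum.inr j) else 0) :=
    fun i => by exact sumL m (fun i' => if i ≠ i' then D m i * D m i' else 0)
  rw [hinner, Finset.sum_congr rfl (fun j (_ : j ∈ Finset.univ) => hinner (Sum.inr j))]
  simp only [D, Sum.elim_inl, Sum.elim_inr, ne_eq, reduceCtorEq, not_false_iff, if_true,
    Sum.inr.injEq, smul_eq_mul]
  have h2 : ∀ j : Fin m,
      (∑ k : Fin m, if ¬j = k then (2*m-2) * (2*m-2) else 0) = (m-1) * ((2*m-2)*(2*m-2)) := by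
    intro j
    rw [← Finset.sum_filter]
    rw [Finset.sum_const]
    simp [Finset.filter_ne, Finset.card_erase_of_mem]
  have h3 : (∑ x : Fin m, m * (2*m-2)) = m * (m * (2*m-2)) := by simp [mul_comm]
  have h4 : ∑ j : Fin m, ((m - 1) * ((2 * m - 2) * m)
        + ∑ k : Fin m, if ¬j = k then (2 * m - 2) * (2 * m - 2) else 0)
      = m * ((m - 1) * ((2 * m - 2) * m) + (m-1) * ((2*m-2)*(2*m-2))) := by
    have h5 := Finset.sum_congr rfl (fun j (_ : j ∈ (Finset.univ : Finset (Fin m))) =>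
      congrArg (fun t => (m - 1) * ((2 * m - 2) * m) + t) (h2 j))
    rw [h5, Finset.sum_const, Finset.card_univ, Fintype.card_fin, smul_eq_mul]
  simp only [not_true, if_false, mul_zero, zero_add, h3, h4]
  generalize m - 1 = a
  generalize 2*m-2 = b
  ring

theorem zagreb_noncommuting_dihedral_odd (m : ℕ) (hm : 3 ≤ m) (hodd : Odd m) :
    (zagrebM1 (DOddV m) (DOddG m)ᶜ : ℚ) = (m : ℚ) * ((m : ℚ) - 1) * (5 * (m : ℚ) - 4) ∧
    (zagrebM2 (DOddV m) (DOddG m)ᶜ : ℚ)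
      = (m : ℚ) * ((m : ℚ) - 1) * (4 * (m : ℚ) ^ 2 - 6 * (m : ℚ) + 2) ∧
    (((DOddG m)ᶜ.edgeFinset.card : ℚ)) = 3 * (m : ℚ) * ((m : ℚ) - 1) / 2 ∧
    (zagrebM2 (DOddV m) (DOddG m)ᶜ : ℚ) / (((DOddG m)ᶜ.edgeFinset.card : ℚ))
      > (zagrebM1 (DOddV m) (DOddG m)ᶜ : ℚ) / (Fintype.card (DOddV m) : ℚ) := by
  have h1 : (1:ℕ) ≤ m := by omega
  have h2 : (2:ℕ) ≤ 2 * m := by omega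
  have hM1 : (zagrebM1 (DOddV m) (DOddG m)ᶜ : ℚ)
      = (m : ℚ) * ((m : ℚ) - 1) * (5 * (m : ℚ) - 4) := by
    have := congrArg (Nat.cast (R := ℚ)) (M1_nat m)
    push_cast [Nat.cast_sub h1, Nat.cast_sub h2] at this
    rw [this]; ring
  have hM2 : (zagrebM2 (DOddV m) (DOddG m)ᶜ : ℚ)
      = (m : ℚ) * ((m : ℚ) - 1) * (4 * (m : ℚ) ^ 2 - 6 * (m : ℚ) + 2) := by
    have := congrArg (Nat.cast (R := ℚ)) (M2_nat m)
    push_cast [Nat.cast_sub h1, Nat.cast_sub h2] at this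
    linarith
  have hE : (((DOddG m)ᶜ.edgeFinset.card : ℚ)) = 3 * (m : ℚ) * ((m : ℚ) - 1) / 2 := by
    have := congrArg (Nat.cast (R := ℚ)) (edge_nat m)
    push_cast [Nat.cast_sub h1, Nat.cast_sub h2] at this
    linarith
  have hV : ((Fintype.card (DOddV m) : ℚ)) = 2 * (m:ℚ) - 1 := by
    have := congrArg (Nat.cast (R := ℚ)) (card_nat m)
    push_cast [Nat.cast_sub h1] at this
    linarith
  refine ⟨hM1, hM2, hE, ?_⟩
  rw [hM1, hM2, hE, hV]
  have hm' : (3:ℚ) ≤ (m:ℚ) := by exact_mod_cast hm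
  have hpos : (0:ℚ) < (m:ℚ) * ((m:ℚ)-1)^2 * ((m:ℚ)-2)^2 :=
    mul_pos (mul_pos (by linarith) (pow_pos (by linarith) 2)) (pow_pos (by linarith) 2)
  rw [gt_iff_lt, div_lt_div_iff₀ (by nlinarith) (by nlinarith)]
  nlinarith [hpos]
end

section
/- Let m ≥ 3 and n ≥ 1 and let Γ = K_{(m−1)n} ⊔ m·K_n. Then M1(Γ) = n(m−1)(mn−n−1)^2 + mn(n−1)^2, M2(Γ) = ((mn−n)(mn−n−1)^3 + mn(n−1)^3)/2, and M2(Γ)/|e(Γ)| > M1(Γ)/|v(Γ)|. -/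
open Finset

abbrev GZV (m n : ℕ) : Type :=
  Σ i : Unit ⊕ Fin m, Fin (Sum.elim (fun _ : Unit => (m - 1) * n) (fun _ : Fin m => n) i)

abbrev GZG (m n : ℕ) : SimpleGraph (GZV m n) :=
  cliqueUnion (Sum.elim (fun _ : Unit => (m - 1) * n) (fun _ : Fin m => n))



section DartSum
variable {V : Type*} [Fintype V] [DecidableEq V] (G : SimpleGraph V) [DecidableRel G.Adj]

lemma sum_darts_edge (F : Sym2 V → ℕ) :
    ∑ d : G.Dart, F d.edge = 2 * ∑ e ∈ G.edgeFinset, F e := by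
  rw [← Finset.sum_fiberwise_of_maps_to
      (fun d _ => by rw [SimpleGraph.mem_edgeFinset]; exact d.edge_mem : ∀ d ∈ univ, SimpleGraph.Dart.edge d ∈ G.edgeFinset) (fun d => F d.edge),
    Finset.mul_sum]
  refine Finset.sum_congr rfl fun e he => ?_
  rw [Finset.sum_congr rfl (fun d hd => by rw [(Finset.mem_filter.mp hd).2] : ∀ d ∈ univ.filter (fun d => SimpleGraph.Dart.edge d = e), F d.edge = F e),
    Finset.sum_const, smul_eq_mul]
  congr 1
  exact G.dart_edge_fiber_card e (SimpleGraph.mem_edgeFinset.mp he)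

/-- The equiv used in the Dart fintype instance. -/
def dartSigmaEquiv : (Σ v, G.neighborSet v) ≃ G.Dart where
  toFun s := ⟨(s.fst, s.snd), s.snd.property⟩
  invFun d := ⟨d.fst, d.snd, d.adj⟩
  left_inv s := by ext <;> simp
  right_inv d := by ext <;> simp

lemma sum_darts_eq_sum_neighbors (F : Sym2 V → ℕ) :
    ∑ d : G.Dart, F d.edge = ∑ v, ∑ w ∈ G.neighborFinset v, F s(v, w) := by
  rw [← (dartSigmaEquiv G).sum_comp (fun d => F d.edge)]
  rw [← Finset.univ_sigma_univ, Finset.sum_sigma]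
  refine Finset.sum_congr rfl fun v _ => ?_
  exact Finset.sum_set_coe (f := fun w => F s(v, w)) (G.neighborSet v)

end DartSum

section Clique
variable {ι : Type*} [Fintype ι] [DecidableEq ι] (c : ι → ℕ)

lemma cliqueUnion_neighborFinset (x : Σ i, Fin (c i)) :
    (cliqueUnion c).neighborFinset x = (univ.image (Sigma.mk x.1)).erase x := by
  ext y
  simp only [SimpleGraph.mem_neighborFinset, Finset.mem_erase, Finset.mem_image,
    Finset.mem_univ, true_and]
  constructor
  · rintro ⟨h1, h2⟩
    refine ⟨fun h => h2 h.symm, ?_⟩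
    obtain ⟨i, a⟩ := x; obtain ⟨j, b⟩ := y
    cases h1
    exact ⟨b, rfl⟩
  · rintro ⟨h1, b, rfl⟩
    exact ⟨rfl, fun h => h1 h.symm⟩

lemma cliqueUnion_degree_s8 (x : Σ i, Fin (c i)) :
    (cliqueUnion c).degree x = c x.1 - 1 := by
  rw [SimpleGraph.degree, cliqueUnion_neighborFinset,
    Finset.card_erase_of_mem, Finset.card_image_of_injective _ sigma_mk_injective,
    Finset.card_univ, Fintype.card_fin]
  exact Finset.mem_image_of_mem _ (Finset.mem_univ x.2)

lemma cliqueUnion_M1 : zagrebM1 _ (cliqueUnion c) = ∑ i, c i * (c i - 1) ^ 2 := by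
  rw [zagrebM1, ← Finset.univ_sigma_univ, Finset.sum_sigma]
  refine Finset.sum_congr rfl fun i _ => ?_
  simp [cliqueUnion_degree_s8]

lemma cliqueUnion_M2 : 2 * zagrebM2 _ (cliqueUnion c) = ∑ i, c i * (c i - 1) ^ 3 := by
  rw [zagrebM2, ← sum_darts_edge, sum_darts_eq_sum_neighbors,
    ← Finset.univ_sigma_univ, Finset.sum_sigma]
  refine Finset.sum_congr rfl fun i _ => ?_
  have : ∀ x : Σ i, Fin (c i), ∀ y ∈ (cliqueUnion c).neighborFinset x,
      Sym2.lift ⟨fun u v => (cliqueUnion c).degree u * (cliqueUnion c).degree v,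
        fun u v => mul_comm _ _⟩ s(x, y) = (c x.1 - 1) ^ 2 := by
    intro x y hy
    have h1 : y.1 = x.1 := ((SimpleGraph.mem_neighborFinset _ _ _).mp hy).1.symm
    rw [Sym2.lift_mk]
    simp only [cliqueUnion_degree_s8, h1]
    ring
  calc ∑ a : Fin (c i), ∑ y ∈ (cliqueUnion c).neighborFinset ⟨i, a⟩,
        Sym2.lift ⟨fun u v => (cliqueUnion c).degree u * (cliqueUnion c).degree v,
          fun u v => mul_comm _ _⟩ s(⟨i, a⟩, y)
      = ∑ a : Fin (c i), (c i - 1) * (c i - 1) ^ 2 := by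
        refine Finset.sum_congr rfl fun a _ => ?_
        rw [Finset.sum_congr rfl (this ⟨i, a⟩), Finset.sum_const, smul_eq_mul,
          ← cliqueUnion_degree_s8 c ⟨i, a⟩]
        rfl
    _ = c i * (c i - 1) ^ 3 := by
        rw [Finset.sum_const, Finset.card_univ, Fintype.card_fin, smul_eq_mul]
        ring

lemma cliqueUnion_edges : 2 * ((cliqueUnion c).edgeFinset.card) = ∑ i, c i * (c i - 1) := by
  rw [← SimpleGraph.sum_degrees_eq_twice_card_edges, ← Finset.univ_sigma_univ, Finset.sum_sigma]
  refine Finset.sum_congr rfl fun i _ => ?_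
  simp [cliqueUnion_degree_s8]

end Clique

lemma zagreb_key_ineq (a d b t : ℚ) (ha : 2 ≤ a) (hd : 1 ≤ d) (hb : 3 ≤ b) (ht : 0 ≤ t)
    (hdt : 1 ≤ d - t) :
    (a * d^2 + b * t^2) / (a + b) < ((a * d^3 + b * t^3) / 2) / ((a * d + b * t) / 2) := by
  have hEpos : (0:ℚ) < (a * d + b * t) / 2 := by nlinarith
  have hVpos : (0:ℚ) < a + b := by linarith
  rw [div_lt_div_iff₀ hVpos hEpos]
  nlinarith [mul_pos (mul_pos (mul_pos (by linarith : (0:ℚ) < a) (by linarith : (0:ℚ) < b))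
    (by nlinarith : (0:ℚ) < (d - t)^2)) (by linarith : (0:ℚ) < d + t)]

set_option maxHeartbeats 1600000 in
theorem zagreb_commuting_quotient_dihedral (m n : ℕ) (hm : 3 ≤ m) (hn : 1 ≤ n) :
    (zagrebM1 (GZV m n) (GZG m n) : ℚ)
      = (n : ℚ) * ((m : ℚ) - 1) * ((m : ℚ) * n - n - 1) ^ 2
        + (m : ℚ) * n * ((n : ℚ) - 1) ^ 2 ∧
    (zagrebM2 (GZV m n) (GZG m n) : ℚ)
      = (((m : ℚ) * n - n) * ((m : ℚ) * n - n - 1) ^ 3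
          + (m : ℚ) * n * ((n : ℚ) - 1) ^ 3) / 2 ∧
    (zagrebM2 (GZV m n) (GZG m n) : ℚ) / ((GZG m n).edgeFinset.card : ℚ)
      > (zagrebM1 (GZV m n) (GZG m n) : ℚ) / (Fintype.card (GZV m n) : ℚ) := by
  have h1m : (1:ℕ) ≤ m := by omega
  have hA1 : (1:ℕ) ≤ (m-1)*n := by simpa using Nat.mul_le_mul (show 1 ≤ m - 1 by omega) hn
  have hM1 : zagrebM1 (GZV m n) (GZG m n)
      = (m-1)*n * ((m-1)*n - 1)^2 + m * (n * (n-1)^2) := by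
    rw [cliqueUnion_M1]
    simp [Fintype.sum_sum_type]
  have hM2 : 2 * zagrebM2 (GZV m n) (GZG m n)
      = (m-1)*n * ((m-1)*n - 1)^3 + m * (n * (n-1)^3) := by
    rw [cliqueUnion_M2]
    simp [Fintype.sum_sum_type]
  have hE : 2 * (GZG m n).edgeFinset.card
      = (m-1)*n * ((m-1)*n - 1) + m * (n * (n-1)) := by
    rw [cliqueUnion_edges]
    simp [Fintype.sum_sum_type]
  have hV : Fintype.card (GZV m n) = (m-1)*n + m * n := by
    simp [Fintype.card_sigma, Fintype.sum_sum_type]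
  have hmq : (3:ℚ) ≤ (m:ℚ) := by exact_mod_cast hm
  have hnq : (1:ℚ) ≤ (n:ℚ) := by exact_mod_cast hn
  have q1 : (zagrebM1 (GZV m n) (GZG m n) : ℚ)
      = ((m:ℚ)*n - n) * ((m:ℚ)*n - n - 1)^2 + ((m:ℚ)*n) * ((n:ℚ) - 1)^2 := by
    rw [hM1]
    push_cast [Nat.cast_sub h1m, Nat.cast_sub hA1, Nat.cast_sub hn]
    ring
  have q2 : (zagrebM2 (GZV m n) (GZG m n) : ℚ)
      = (((m:ℚ)*n - n) * ((m:ℚ)*n - n - 1)^3 + ((m:ℚ)*n) * ((n:ℚ) - 1)^3) / 2 := by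
    have h := congrArg (Nat.cast : ℕ → ℚ) hM2
    push_cast [Nat.cast_sub h1m, Nat.cast_sub hA1, Nat.cast_sub hn] at h
    rw [eq_div_iff (two_ne_zero)]
    linarith [h]
  have qE : ((GZG m n).edgeFinset.card : ℚ)
      = (((m:ℚ)*n - n) * ((m:ℚ)*n - n - 1) + ((m:ℚ)*n) * ((n:ℚ) - 1)) / 2 := by
    have h := congrArg (Nat.cast : ℕ → ℚ) hE
    push_cast [Nat.cast_sub h1m, Nat.cast_sub hA1, Nat.cast_sub hn] at h
    rw [eq_div_iff (two_ne_zero)]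
    linarith [h]
  have qV : ((Fintype.card (GZV m n) : ℕ) : ℚ) = ((m:ℚ)*n - n) + (m:ℚ)*n := by
    rw [hV]
    push_cast [Nat.cast_sub h1m]
    ring
  refine ⟨by rw [q1]; ring, by rw [q2], ?_⟩
  rw [gt_iff_lt, q1, q2, qE, qV]
  exact zagreb_key_ineq _ _ _ _ (by nlinarith) (by nlinarith) (by nlinarith) (by linarith)
    (by nlinarith)
end

section
/- Let m ≥ 3, n ≥ 1 and let Γ be the complement of K_{(m−1)n} ⊔ m·K_n on (2m−1)n vertices. Then M1(Γ) = n^3(5m^3 − 9m^2 + 4m), M2(Γ) = n^4(4m^4 − 10m^3 + 8m^2 − 2m), |e(Γ)| = (3m^2n^2 − 3mn^2)/2, and M2(Γ)/|e(Γ)| > M1(Γ)/|v(Γ)|. -/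
open Finset

/- ### Auxiliary lemmas -/

lemma two_mul_sum_edgeFinset {V : Type*} [Fintype V] [DecidableEq V] (G : SimpleGraph V)
    [DecidableRel G.Adj] (g : Sym2 V → ℕ) :
    2 * ∑ e ∈ G.edgeFinset, g e = ∑ v, ∑ w ∈ G.neighborFinset v, g s(v, w) := by
  have h1 : ∑ d : G.Dart, g d.edge = 2 * ∑ e ∈ G.edgeFinset, g e := by
    rw [← Finset.sum_fiberwise_of_maps_to'
      (g := SimpleGraph.Dart.edge) (t := G.edgeFinset)
      (fun d _ => by simp [SimpleGraph.Dart.edge_mem]) g]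
    rw [Finset.mul_sum]
    refine Finset.sum_congr rfl fun e he => ?_
    rw [Finset.sum_const, smul_eq_mul]
    congr 1
    exact G.dart_edge_fiber_card e (by simpa using he)
  have h2 : ∑ d : G.Dart, g d.edge = ∑ v, ∑ w ∈ G.neighborFinset v, g s(v, w) := by
    rw [← Finset.sum_fiberwise univ (fun d : G.Dart => d.fst) (fun d => g d.edge)]
    refine Finset.sum_congr rfl fun v _ => ?_
    refine Finset.sum_bij' (fun d _ => d.snd)
      (fun w hw => SimpleGraph.Dart.mk (v, w) (by simpa using hw)) ?_ ?_ ?_ ?_ ?_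
    · intro d hd
      simp only [mem_filter, mem_univ, true_and] at hd
      simp only [SimpleGraph.mem_neighborFinset]
      exact hd ▸ d.adj
    · intro w hw; simp
    · intro d hd
      simp only [mem_filter, mem_univ, true_and] at hd
      exact SimpleGraph.Dart.ext _ _ (by cases d; exact Prod.ext hd.symm rfl)
    · intro w hw; rfl
    · intro d hd
      simp only [mem_filter, mem_univ, true_and] at hd
      subst hd
      rfl
  rw [← h1, h2]

section CliqueUnionLemmas
variable {ι : Type*} [DecidableEq ι] [Fintype ι] (f : ι → ℕ)

omit [Fintype ι] in
lemma cliqueUnion_compl_adj (v w : Σ i, Fin (f i)) :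
    (cliqueUnion f)ᶜ.Adj v w ↔ ¬ w.1 = v.1 := by
  simp only [SimpleGraph.compl_adj, cliqueUnion, ne_eq]
  constructor
  · rintro ⟨h1, h2⟩ he; exact h2 ⟨he.symm, h1⟩
  · intro h
    exact ⟨fun hvw => h (congrArg Sigma.fst hvw.symm), fun hh => h hh.1.symm⟩

lemma fiber_card (j : ι) :
    #(univ.filter fun w : Σ i, Fin (f i) => w.1 = j) = f j := by
  have : (univ.filter fun w : Σ i, Fin (f i) => w.1 = j)
      = univ.map ⟨fun x : Fin (f j) => ⟨j, x⟩, fun a b h => by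
          simpa [Sigma.mk.inj_iff] using h⟩ := by
    ext ⟨i, x⟩
    simp only [mem_filter, mem_univ, true_and, mem_map, Function.Embedding.coeFn_mk]
    constructor
    · rintro rfl; exact ⟨x, rfl⟩
    · rintro ⟨y, hy⟩; cases hy; rfl
  rw [this, card_map, card_univ, Fintype.card_fin]

lemma cliqueUnion_compl_nbhd (v : Σ i, Fin (f i)) :
    (cliqueUnion f)ᶜ.neighborFinset v = univ.filter fun w => ¬ w.1 = v.1 := by
  ext w
  simp only [SimpleGraph.mem_neighborFinset, cliqueUnion_compl_adj, mem_filter, mem_univ,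
    true_and]

lemma fiber_sum (D : ι → ℕ) (j : ι) :
    ∑ w ∈ univ.filter (fun w : Σ i, Fin (f i) => w.1 = j), D w.1 = f j * D j := by
  rw [Finset.sum_congr rfl (fun w hw => by rw [(mem_filter.1 hw).2]),
    Finset.sum_const, smul_eq_mul, fiber_card]

omit [DecidableEq ι] in
lemma sigma_sum (D : ι → ℕ) :
    ∑ w : Σ i, Fin (f i), D w.1 = ∑ i, f i * D i := by
  rw [← Finset.univ_sigma_univ, Finset.sum_sigma]
  simp [mul_comm]

lemma deg_add (v : Σ i, Fin (f i)) :
    (cliqueUnion f)ᶜ.degree v + f v.1 = ∑ i, f i := by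
  have h1 := Finset.card_filter_add_card_filter_not
    (s := (univ : Finset (Σ i, Fin (f i)))) (p := fun w => w.1 = v.1)
  have h2 : #(univ : Finset (Σ i, Fin (f i))) = ∑ i, f i := by
    rw [card_univ, Fintype.card_sigma]; simp
  rw [← SimpleGraph.card_neighborFinset_eq_degree, cliqueUnion_compl_nbhd]
  rw [fiber_card] at h1
  have h1' : f v.1 + #(filter (fun w : Σ i, Fin (f i) => ¬ w.1 = v.1) univ)
      = #(univ : Finset (Σ i, Fin (f i))) := h1
  omega

lemma nbhd_sum (D : ι → ℕ) (v : Σ i, Fin (f i)) :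
    (∑ w ∈ (cliqueUnion f)ᶜ.neighborFinset v, D w.1) + f v.1 * D v.1
      = ∑ i, f i * D i := by
  rw [cliqueUnion_compl_nbhd, ← fiber_sum f D v.1, ← sigma_sum f D, add_comm]
  exact Finset.sum_filter_add_sum_filter_not _ _ _

end CliqueUnionLemmas

set_option maxHeartbeats 2000000 in
theorem zagreb_noncommuting_quotient_dihedral (m n : ℕ) (hm : 3 ≤ m) (hn : 1 ≤ n) :
    (zagrebM1 (GZV m n) (GZG m n)ᶜ : ℚ)
      = (n : ℚ) ^ 3 * (5 * (m : ℚ) ^ 3 - 9 * (m : ℚ) ^ 2 + 4 * (m : ℚ)) ∧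
    (zagrebM2 (GZV m n) (GZG m n)ᶜ : ℚ)
      = (n : ℚ) ^ 4 * (4 * (m : ℚ) ^ 4 - 10 * (m : ℚ) ^ 3 + 8 * (m : ℚ) ^ 2 - 2 * (m : ℚ)) ∧
    (((GZG m n)ᶜ.edgeFinset.card : ℚ))
      = (3 * (m : ℚ) ^ 2 * (n : ℚ) ^ 2 - 3 * (m : ℚ) * (n : ℚ) ^ 2) / 2 ∧
    (zagrebM2 (GZV m n) (GZG m n)ᶜ : ℚ) / (((GZG m n)ᶜ.edgeFinset.card : ℚ))
      > (zagrebM1 (GZV m n) (GZG m n)ᶜ : ℚ) / (Fintype.card (GZV m n) : ℚ) := by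
  obtain ⟨k, rfl⟩ : ∃ k, m = k + 3 := ⟨m - 3, by omega⟩
  have hsub : k + 3 - 1 = k + 2 := by omega
  have htot : ∑ i, Sum.elim (fun _ : Unit => (k+3-1) * n) (fun _ : Fin (k+3) => n) i
      = (k+2)*n + (k+3)*n := by
    rw [Fintype.sum_sum_type]
    simp [hsub, mul_comm]
  -- degrees
  have hdeg : ∀ v : GZV (k+3) n, (GZG (k+3) n)ᶜ.degree v
      = Sum.elim (fun _ : Unit => (k+3) * n) (fun _ : Fin (k+3) => (2*k+4) * n) v.1 := by
    intro v
    have h : (GZG (k+3) n)ᶜ.degree v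
        + Sum.elim (fun _ : Unit => (k+3-1) * n) (fun _ : Fin (k+3) => n) v.1
        = ∑ i, Sum.elim (fun _ : Unit => (k+3-1) * n) (fun _ : Fin (k+3) => n) i :=
      deg_add _ v
    rw [htot] at h
    have hr : (2*k+4)*n + n = (k+2)*n + (k+3)*n := by ring
    obtain ⟨i, x⟩ := v
    rcases i with i | i <;>
      simp only [Sum.elim_inl, Sum.elim_inr, hsub] at h ⊢ <;> omega
  -- number of vertices
  have hcard : Fintype.card (GZV (k+3) n) = (k+2)*n + (k+3)*n := by
    rw [Fintype.card_sigma, ← htot]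
    simp
  -- total degree sum
  have htotD : ∑ i, Sum.elim (fun _ : Unit => (k+3-1) * n) (fun _ : Fin (k+3) => n) i
        * Sum.elim (fun _ : Unit => (k+3) * n) (fun _ : Fin (k+3) => (2*k+4) * n) i
      = (k+2)*n*((k+3)*n) + (k+3)*(n*((2*k+4)*n)) := by
    rw [Fintype.sum_sum_type]
    simp [hsub, mul_comm]
  -- M1
  have hM1 : zagrebM1 (GZV (k+3) n) (GZG (k+3) n)ᶜ
      = (k+2)*n*((k+3)*n)^2 + (k+3)*(n*((2*k+4)*n)^2) := by
    unfold zagrebM1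
    rw [Finset.sum_congr rfl (fun v _ => by rw [hdeg v]),
      sigma_sum _ (fun i => (Sum.elim (fun _ : Unit => (k+3) * n)
        (fun _ : Fin (k+3) => (2*k+4) * n) i) ^ 2)]
    rw [Fintype.sum_sum_type]
    simp [hsub, mul_comm]
  -- edge count
  have hE : 2 * #((GZG (k+3) n)ᶜ.edgeFinset)
      = (k+2)*n*((k+3)*n) + (k+3)*(n*((2*k+4)*n)) := by
    rw [← SimpleGraph.sum_degrees_eq_twice_card_edges,
      Finset.sum_congr rfl (fun v _ => by rw [hdeg v]), sigma_sum _ _, htotD]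
  -- neighbourhood degree sums
  have hnb : ∀ v : GZV (k+3) n, ∑ w ∈ (GZG (k+3) n)ᶜ.neighborFinset v,
        Sum.elim (fun _ : Unit => (k+3) * n) (fun _ : Fin (k+3) => (2*k+4) * n) w.1
      = Sum.elim (fun _ : Unit => (k+3)*(n*((2*k+4)*n)))
          (fun _ : Fin (k+3) => (k+2)*n*((k+3)*n) + (k+2)*(n*((2*k+4)*n))) v.1 := by
    intro v
    have h : (∑ w ∈ (GZG (k+3) n)ᶜ.neighborFinset v,
          Sum.elim (fun _ : Unit => (k+3) * n) (fun _ : Fin (k+3) => (2*k+4) * n) w.1)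
        + Sum.elim (fun _ : Unit => (k+3-1) * n) (fun _ : Fin (k+3) => n) v.1
          * Sum.elim (fun _ : Unit => (k+3) * n) (fun _ : Fin (k+3) => (2*k+4) * n) v.1
        = ∑ i, Sum.elim (fun _ : Unit => (k+3-1) * n) (fun _ : Fin (k+3) => n) i
          * Sum.elim (fun _ : Unit => (k+3) * n) (fun _ : Fin (k+3) => (2*k+4) * n) i :=
      nbhd_sum _ _ v
    rw [htotD] at h
    obtain ⟨i, x⟩ := v
    rcases i with i | i
    · simp only [Sum.elim_inl, hsub] at h ⊢
      have hr : (k+3)*(n*((2*k+4)*n)) + (k+2)*n*((k+3)*n)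
          = (k+2)*n*((k+3)*n) + (k+3)*(n*((2*k+4)*n)) := by ring
      omega
    · simp only [Sum.elim_inr] at h ⊢
      have hr : ((k+2)*n*((k+3)*n) + (k+2)*(n*((2*k+4)*n))) + n*((2*k+4)*n)
          = (k+2)*n*((k+3)*n) + (k+3)*(n*((2*k+4)*n)) := by ring
      omega
  -- M2
  have hM2 : 2 * zagrebM2 (GZV (k+3) n) (GZG (k+3) n)ᶜ
      = (k+2)*n*(((k+3)*n) * ((k+3)*(n*((2*k+4)*n))))
        + (k+3)*(n*(((2*k+4)*n) * ((k+2)*n*((k+3)*n) + (k+2)*(n*((2*k+4)*n))))) := by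
    unfold zagrebM2
    rw [two_mul_sum_edgeFinset]
    have hinner : ∀ v : GZV (k+3) n, ∑ w ∈ (GZG (k+3) n)ᶜ.neighborFinset v,
        Sym2.lift ⟨fun u w => (GZG (k+3) n)ᶜ.degree u * (GZG (k+3) n)ᶜ.degree w,
          fun u w => mul_comm _ _⟩ s(v, w)
        = (Sum.elim (fun _ : Unit => (k+3) * n) (fun _ : Fin (k+3) => (2*k+4) * n) v.1)
          * (Sum.elim (fun _ : Unit => (k+3)*(n*((2*k+4)*n)))
            (fun _ : Fin (k+3) => (k+2)*n*((k+3)*n) + (k+2)*(n*((2*k+4)*n))) v.1) := by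
      intro v
      rw [← hnb v, Finset.mul_sum]
      refine Finset.sum_congr rfl fun w _ => ?_
      simp only [Sym2.lift_mk]
      rw [hdeg v, hdeg w]
    rw [Finset.sum_congr rfl (fun v _ => hinner v),
      sigma_sum _ (fun i => (Sum.elim (fun _ : Unit => (k+3) * n)
          (fun _ : Fin (k+3) => (2*k+4) * n) i)
        * (Sum.elim (fun _ : Unit => (k+3)*(n*((2*k+4)*n)))
            (fun _ : Fin (k+3) => (k+2)*n*((k+3)*n) + (k+2)*(n*((2*k+4)*n))) i))]
    rw [Fintype.sum_sum_type]
    simp [hsub, mul_comm]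
  -- now pass to ℚ
  have hn' : (1:ℚ) ≤ (n:ℚ) := by exact_mod_cast hn
  have hn0 : (0:ℚ) < (n:ℚ) := by linarith
  have hk : (0:ℚ) ≤ (k:ℚ) := Nat.cast_nonneg k
  have hM1Q : (zagrebM1 (GZV (k+3) n) (GZG (k+3) n)ᶜ : ℚ)
      = (n : ℚ) ^ 3 * (5 * ((k:ℚ)+3) ^ 3 - 9 * ((k:ℚ)+3) ^ 2 + 4 * ((k:ℚ)+3)) := by
    have h := congrArg (fun x : ℕ => (x : ℚ)) hM1
    push_cast at h
    linear_combination h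
  have hM2Q : (zagrebM2 (GZV (k+3) n) (GZG (k+3) n)ᶜ : ℚ)
      = (n : ℚ) ^ 4 * (4 * ((k:ℚ)+3) ^ 4 - 10 * ((k:ℚ)+3) ^ 3 + 8 * ((k:ℚ)+3) ^ 2
        - 2 * ((k:ℚ)+3)) := by
    have h := congrArg (fun x : ℕ => (x : ℚ)) hM2
    push_cast at h
    linear_combination h / 2
  have hEQ : ((#((GZG (k+3) n)ᶜ.edgeFinset) : ℕ) : ℚ)
      = (3 * ((k:ℚ)+3) ^ 2 * (n:ℚ) ^ 2 - 3 * ((k:ℚ)+3) * (n:ℚ) ^ 2) / 2 := by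
    have h := congrArg (fun x : ℕ => (x : ℚ)) hE
    push_cast at h
    linear_combination h / 2
  have hNQ : ((Fintype.card (GZV (k+3) n) : ℕ) : ℚ) = (2*(k:ℚ)+5) * (n:ℚ) := by
    have h := congrArg (fun x : ℕ => (x : ℚ)) hcard
    push_cast at h
    linear_combination h
  have hmQ : (((k + 3 : ℕ) : ℚ)) = ((k:ℚ) + 3) := by push_cast; ring
  refine ⟨by rw [hM1Q, hmQ], by rw [hM2Q, hmQ], by rw [hEQ, hmQ], ?_⟩
  rw [gt_iff_lt, hM1Q, hM2Q, hEQ, hNQ]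
  have hEpos : (0:ℚ) < (3 * ((k:ℚ)+3) ^ 2 * (n:ℚ) ^ 2 - 3 * ((k:ℚ)+3) * (n:ℚ) ^ 2) / 2 := by
    have hn2 : (0:ℚ) < (n:ℚ)^2 := pow_pos hn0 2
    have heq : (3 * ((k:ℚ)+3) ^ 2 * (n:ℚ) ^ 2 - 3 * ((k:ℚ)+3) * (n:ℚ) ^ 2) / 2
        = (3*((k:ℚ)+3)*((k:ℚ)+2)/2) * (n:ℚ)^2 := by ring
    rw [heq]
    exact mul_pos (by nlinarith) hn2
  have hNpos : (0:ℚ) < (2*(k:ℚ)+5) * (n:ℚ) := by nlinarith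
  rw [div_lt_div_iff₀ hNpos hEpos]
  have key : (n : ℚ) ^ 4 * (4 * ((k:ℚ)+3) ^ 4 - 10 * ((k:ℚ)+3) ^ 3 + 8 * ((k:ℚ)+3) ^ 2
        - 2 * ((k:ℚ)+3)) * ((2*(k:ℚ)+5) * (n:ℚ))
      - (n : ℚ) ^ 3 * (5 * ((k:ℚ)+3) ^ 3 - 9 * ((k:ℚ)+3) ^ 2 + 4 * ((k:ℚ)+3))
        * ((3 * ((k:ℚ)+3) ^ 2 * (n:ℚ) ^ 2 - 3 * ((k:ℚ)+3) * (n:ℚ) ^ 2) / 2)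
      = (1/2) * ((k:ℚ)+3) * ((k:ℚ)+2)^2 * ((k:ℚ)+1)^2 * (n:ℚ)^5 := by ring
  have hpos : (0:ℚ) < (1/2) * ((k:ℚ)+3) * ((k:ℚ)+2)^2 * ((k:ℚ)+1)^2 * (n:ℚ)^5 := by positivity
  linarith
end

section
/- Let n ≥ 1 and let Γ be the complement of K_{4n} ⊔ 5·K_{3n} on 19n vertices. Then M1(Γ) = 4740n^3, M2(Γ) = 37440n^4, |e(Γ)| = 150n^2, and M2(Γ)/|e(Γ)| > M1(Γ)/|v(Γ)|. -/
open Finset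

lemma cliqueUnion_adj_iff {ι : Type*} (m : ι → ℕ) (x y : Σ i, Fin (m i)) :
    (cliqueUnion m).Adj x y ↔ x.1 = y.1 ∧ x ≠ y := Iff.rfl

abbrev SzV (n : ℕ) : Type :=
  Σ i : Unit ⊕ Fin 5, Fin (Sum.elim (fun _ : Unit => 4 * n) (fun _ : Fin 5 => 3 * n) i)

abbrev SzG (n : ℕ) : SimpleGraph (SzV n) :=
  cliqueUnion (Sum.elim (fun _ : Unit => 4 * n) (fun _ : Fin 5 => 3 * n))

open SimpleGraph in
lemma two_mul_sum_edge {V : Type*} [Fintype V] [DecidableEq V] (G : SimpleGraph V)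
    [DecidableRel G.Adj] (F : Sym2 V → ℕ) :
    2 * ∑ e ∈ G.edgeFinset, F e = ∑ v, ∑ w ∈ G.neighborFinset v, F s(v, w) := by
  have h1 : ∑ d : G.Dart, F d.edge = 2 * ∑ e ∈ G.edgeFinset, F e := by
    rw [← sum_fiberwise_of_maps_to (g := Dart.edge) (t := G.edgeFinset)
      (fun d _ => by rw [mem_edgeFinset]; exact d.edge_mem) (fun d => F d.edge)]
    rw [Finset.mul_sum]
    refine Finset.sum_congr rfl fun e he => ?_
    rw [Finset.sum_congr rfl (fun d hd => by
      rw [(Finset.mem_filter.mp hd).2]), Finset.sum_const, smul_eq_mul,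
      G.dart_edge_fiber_card e (mem_edgeFinset.mp he), two_mul]
  have h2 : ∑ d : G.Dart, F d.edge = ∑ v, ∑ w ∈ G.neighborFinset v, F s(v, w) := by
    rw [← sum_fiberwise_of_maps_to (g := fun d : G.Dart => d.fst) (t := Finset.univ)
      (fun d _ => Finset.mem_univ _) (fun d => F d.edge)]
    refine Finset.sum_congr rfl fun v _ => ?_
    rw [show ({d : G.Dart | d.fst = v} : Finset _) = Finset.univ.filter fun d => d.fst = v from rfl,
      G.dart_fst_fiber v, Finset.sum_image (fun a _ b _ h => G.dartOfNeighborSet_injective v h)]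
    have : ∀ x : G.neighborSet v, (G.dartOfNeighborSet v x).edge = s(v, (x : V)) := fun x => rfl
    simp only [this]
    rw [Finset.sum_set_coe (f := fun w => F s(v, w))]
    rfl
  omega


section aux
variable (n : ℕ)
variable (n : ℕ)

abbrev szm : (Unit ⊕ Fin 5) → ℕ := Sum.elim (fun _ : Unit => 4 * n) (fun _ : Fin 5 => 3 * n)
abbrev szD : (Unit ⊕ Fin 5) → ℕ := Sum.elim (fun _ : Unit => 15 * n) (fun _ : Fin 5 => 16 * n)

lemma sz_sum (f : SzV n → ℕ) :
    ∑ v : SzV n, f v = ∑ i : Unit ⊕ Fin 5, ∑ a : Fin (szm n i), f ⟨i, a⟩ := by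
  rw [← Finset.univ_sigma_univ, Finset.sum_sigma]

lemma sz_card : Fintype.card (SzV n) = 19 * n := by
  rw [← Finset.card_univ, Finset.card_eq_sum_ones, sz_sum]
  simp [Fintype.sum_sum_type, Finset.card_univ]
  ring

lemma sz_fiber (i : Unit ⊕ Fin 5) :
    (Finset.univ.filter fun y : SzV n => y.1 = i) =
      Finset.univ.image (fun a : Fin (szm n i) => (⟨i, a⟩ : SzV n)) := by
  ext ⟨j, a⟩
  simp only [Finset.mem_filter, Finset.mem_univ, true_and, Finset.mem_image]
  constructor
  · rintro rfl; exact ⟨a, rfl⟩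
  · rintro ⟨b, h⟩; cases h; rfl

lemma sz_nbhd (v : SzV n) :
    (SzG n).neighborFinset v = ((Finset.univ.filter fun y : SzV n => y.1 = v.1).erase v) := by
  ext y
  simp only [SimpleGraph.mem_neighborFinset, Finset.mem_erase, Finset.mem_filter, Finset.mem_univ,
    true_and, cliqueUnion_adj_iff]
  constructor
  · rintro ⟨h1, h2⟩; exact ⟨fun h => h2 h.symm, h1.symm⟩
  · rintro ⟨h1, h2⟩; exact ⟨h2.symm, fun h => h1 h.symm⟩

lemma sz_deg (v : SzV n) : (SzG n).degree v = szm n v.1 - 1 := by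
  rw [SimpleGraph.degree, sz_nbhd, Finset.card_erase_of_mem (by simp), sz_fiber,
    Finset.card_image_of_injective _ (fun a b h => by cases h; rfl)]
  simp

lemma sz_degc (hn : 1 ≤ n) (v : SzV n) : (SzG n)ᶜ.degree v = szD n v.1 := by
  rw [SimpleGraph.degree_compl, sz_card, sz_deg]
  obtain ⟨i, a⟩ := v
  cases i <;> simp <;> omega

lemma sz_nbhdc (v : SzV n) :
    (SzG n)ᶜ.neighborFinset v = (Finset.univ.filter fun y : SzV n => y.1 ≠ v.1) := by
  ext y
  simp only [SimpleGraph.mem_neighborFinset, SimpleGraph.compl_adj, Finset.mem_filter,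
    Finset.mem_univ, true_and, cliqueUnion_adj_iff, not_and, not_not]
  constructor
  · rintro ⟨h1, h2⟩ h; exact h1 (h2 h.symm)
  · intro h; exact ⟨fun hh => h (congrArg Sigma.fst hh).symm, fun hh => absurd hh.symm h⟩

variable (n : ℕ)

lemma sz_S : ∑ v : SzV n, szD n v.1 = 300 * n ^ 2 := by
  rw [sz_sum]
  simp [Fintype.sum_sum_type, Finset.sum_const, Finset.card_univ]
  ring

lemma sz_fibsum (i : Unit ⊕ Fin 5) :
    ∑ y ∈ (Finset.univ.filter fun y : SzV n => y.1 = i), szD n y.1 = szm n i * szD n i := by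
  rw [Finset.sum_filter, sz_sum]
  have : ∀ j : Unit ⊕ Fin 5, ∑ a : Fin (szm n j),
      (if (⟨j, a⟩ : SzV n).1 = i then szD n (⟨j, a⟩ : SzV n).1 else 0)
      = if j = i then szm n j * szD n j else 0 := by
    intro j
    by_cases h : j = i <;> simp [h, Finset.sum_const, Finset.card_univ, mul_comm]
  rw [Finset.sum_congr rfl fun j _ => this j, Finset.sum_ite_eq' Finset.univ i
    (fun j => szm n j * szD n j)]
  simp

lemma sz_T (i : Unit ⊕ Fin 5) :
    ∑ y ∈ (Finset.univ.filter fun y : SzV n => y.1 ≠ i), szD n y.1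
      = 300 * n ^ 2 - szm n i * szD n i := by
  have h := Finset.sum_filter_add_sum_filter_not Finset.univ
    (fun y : SzV n => y.1 = i) (fun y => szD n y.1)
  rw [sz_S, sz_fibsum] at h
  exact Nat.eq_sub_of_add_eq' h

end aux

theorem zagreb_noncommuting_quotient_Sz2 (n : ℕ) (hn : 1 ≤ n) :
    (zagrebM1 (SzV n) (SzG n)ᶜ : ℚ) = 4740 * (n : ℚ) ^ 3 ∧
    (zagrebM2 (SzV n) (SzG n)ᶜ : ℚ) = 37440 * (n : ℚ) ^ 4 ∧
    (((SzG n)ᶜ.edgeFinset.card : ℚ)) = 150 * (n : ℚ) ^ 2 ∧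
    (zagrebM2 (SzV n) (SzG n)ᶜ : ℚ) / (((SzG n)ᶜ.edgeFinset.card : ℚ))
      > (zagrebM1 (SzV n) (SzG n)ᶜ : ℚ) / (Fintype.card (SzV n) : ℚ) := by
  have hM1 : zagrebM1 (SzV n) (SzG n)ᶜ = 4740 * n ^ 3 := by
    unfold zagrebM1
    rw [Finset.sum_congr rfl fun v _ => by rw [sz_degc n hn v], sz_sum]
    simp [Fintype.sum_sum_type, Finset.sum_const, Finset.card_univ]
    ring
  have hE : (SzG n)ᶜ.edgeFinset.card = 150 * n ^ 2 := by
    have h := ((SzG n)ᶜ).sum_degrees_eq_twice_card_edges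
    rw [Finset.sum_congr rfl fun v _ => by rw [sz_degc n hn v], sz_S] at h
    omega
  have hM2 : zagrebM2 (SzV n) (SzG n)ᶜ = 37440 * n ^ 4 := by
    have key := two_mul_sum_edge ((SzG n)ᶜ)
      (Sym2.lift ⟨fun u v => (SzG n)ᶜ.degree u * (SzG n)ᶜ.degree v, fun u v => mul_comm _ _⟩)
    have inner : ∀ v : SzV n, ∑ w ∈ ((SzG n)ᶜ).neighborFinset v,
        Sym2.lift ⟨fun u v => (SzG n)ᶜ.degree u * (SzG n)ᶜ.degree v, fun u v => mul_comm _ _⟩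
          s(v, w) = szD n v.1 * (300 * n ^ 2 - szm n v.1 * szD n v.1) := by
      intro v
      simp only [Sym2.lift_mk]
      rw [Finset.sum_congr rfl fun w hw => by rw [sz_degc n hn v, sz_degc n hn w],
        ← Finset.mul_sum, sz_nbhdc, sz_T]
    rw [Finset.sum_congr rfl fun v _ => inner v, sz_sum] at key
    have e1 : (15 * n) * (300 * n ^ 2 - (4 * n) * (15 * n)) = 3600 * n ^ 3 := by
      have : (4 * n) * (15 * n) = 60 * n ^ 2 := by ring
      rw [this]
      have : 300 * n ^ 2 - 60 * n ^ 2 = 240 * n ^ 2 := by omega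
      rw [this]; ring
    have e2 : (16 * n) * (300 * n ^ 2 - (3 * n) * (16 * n)) = 4032 * n ^ 3 := by
      have : (3 * n) * (16 * n) = 48 * n ^ 2 := by ring
      rw [this]
      have : 300 * n ^ 2 - 48 * n ^ 2 = 252 * n ^ 2 := by omega
      rw [this]; ring
    simp only [Fintype.sum_sum_type, Finset.sum_const, Finset.card_univ, Fintype.card_fin,
      Sum.elim_inl, Sum.elim_inr, smul_eq_mul, Fintype.card_unit, one_mul] at key
    simp only [e1, e2] at key
    rw [show (4 * n) * (3600 * n ^ 3) + 5 * ((3 * n) * (4032 * n ^ 3)) = 74880 * n ^ 4 from by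
      ring] at key
    rw [show zagrebM2 (SzV n) (SzG n)ᶜ = ∑ e ∈ ((SzG n)ᶜ).edgeFinset,
      Sym2.lift ⟨fun u v => (SzG n)ᶜ.degree u * (SzG n)ᶜ.degree v, fun u v => mul_comm _ _⟩ e
      from rfl]
    omega
  have hcard := sz_card n
  refine ⟨by rw [hM1]; push_cast; ring, by rw [hM2]; push_cast; ring,
    by rw [hE]; push_cast; ring, ?_⟩
  rw [hM1, hM2, hE, hcard]
  have hn' : (0:ℚ) < n := by exact_mod_cast hn
  rw [gt_iff_lt, div_lt_div_iff₀ (by positivity) (by positivity)]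
  push_cast
  nlinarith [pow_pos hn' 5]
end

section
/- Let q > 2 be a prime power and let Γ = (q(q+1)/2)·K_{q^2−3q+2} ⊔ (q(q−1)/2)·K_{q^2−q} ⊔ (q+1)·K_{q^2−2q+1}. Then |v(Γ)| = (q−1)(q^3−q−1), |e(Γ)| = (q(q−1)/2)(q^4 − 2q^3 − q^2 + 2q + 1), M1(Γ) = q(q−1)(q^6 − 4q^5 + 4q^4 + 2q^3 − 4q^2 + q − 1), and M2(Γ)/|e(Γ)| > M1(Γ)/|v(Γ)|. -/
open Finset

section general
variable {ι : Type*} [Fintype ι] [DecidableEq ι] (m : ι → ℕ)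

lemma cu_filter (i : ι) :
    (univ.filter (fun y : Σ j, Fin (m j) => y.1 = i)) =
      (univ : Finset (Fin (m i))).map ⟨Sigma.mk i, sigma_mk_injective⟩ := by
  ext ⟨j, x⟩
  simp only [mem_filter, mem_univ, true_and, mem_map, Function.Embedding.coeFn_mk]
  constructor
  · rintro rfl; exact ⟨x, rfl⟩
  · rintro ⟨a, h⟩; exact (congrArg Sigma.fst h).symm

lemma cu_degree (v : Σ i, Fin (m i)) :
    (cliqueUnion m).degree v = m v.1 - 1 := by
  have h1 : (cliqueUnion m).neighborFinset v
      = (univ.filter (fun y : Σ j, Fin (m j) => y.1 = v.1)).erase v := by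
    ext y
    simp only [SimpleGraph.mem_neighborFinset, mem_erase, mem_filter, mem_univ, true_and]
    show (v.1 = y.1 ∧ v ≠ y) ↔ _
    constructor
    · rintro ⟨h1, h2⟩; exact ⟨Ne.symm h2, h1.symm⟩
    · rintro ⟨h1, h2⟩; exact ⟨h2.symm, Ne.symm h1⟩
  rw [← SimpleGraph.card_neighborFinset_eq_degree, h1,
    card_erase_of_mem (by simp), cu_filter, card_map, card_univ, Fintype.card_fin]

lemma sigma_sum_s18 (h : ι → ℕ) : ∑ v : Σ i, Fin (m i), h v.1 = ∑ i, m i * h i := by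
  rw [← Finset.univ_sigma_univ, Finset.sum_sigma]
  simp [mul_comm]

lemma cu_card : Fintype.card (Σ i, Fin (m i)) = ∑ i, m i := by simp

lemma cu_twice_edges : 2 * #(cliqueUnion m).edgeFinset = ∑ i, m i * (m i - 1) := by
  rw [← SimpleGraph.sum_degrees_eq_twice_card_edges]
  rw [show ∑ v, (cliqueUnion m).degree v = ∑ v : Σ i, Fin (m i), (m v.1 - 1) from
    Finset.sum_congr rfl fun v _ => cu_degree m v]
  exact sigma_sum_s18 m (fun i => m i - 1)

lemma cu_M1 : zagrebM1 _ (cliqueUnion m) = ∑ i, m i * (m i - 1) ^ 2 := by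
  unfold zagrebM1
  rw [show ∑ v, (cliqueUnion m).degree v ^ 2 = ∑ v : Σ i, Fin (m i), (m v.1 - 1) ^ 2 from
    Finset.sum_congr rfl fun v _ => by rw [cu_degree]]
  exact sigma_sum_s18 m (fun i => (m i - 1) ^ 2)

lemma dart_sum {V : Type*} [Fintype V] [DecidableEq V] (G : SimpleGraph V)
    [DecidableRel G.Adj] (f : Sym2 V → ℕ) :
    ∑ d : G.Dart, f d.edge = 2 * ∑ e ∈ G.edgeFinset, f e := by
  rw [← Finset.sum_fiberwise_of_maps_to
    (g := SimpleGraph.Dart.edge) (t := G.edgeFinset)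
    (fun d _ => SimpleGraph.mem_edgeFinset.2 d.edge_mem) (fun d => f d.edge),
    Finset.mul_sum]
  refine sum_congr rfl fun e he => ?_
  rw [sum_congr rfl (g := fun _ => f e) (fun d hd => by
    rw [(mem_filter.1 hd).2]), sum_const,
    G.dart_edge_fiber_card e (SimpleGraph.mem_edgeFinset.1 he), smul_eq_mul]

lemma dart_fst_sum {V : Type*} [Fintype V] [DecidableEq V] (G : SimpleGraph V)
    [DecidableRel G.Adj] (g : V → ℕ) :
    ∑ d : G.Dart, g d.fst = ∑ v, G.degree v * g v := by
  rw [← Finset.sum_fiberwise_of_maps_to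
    (g := fun d : G.Dart => d.fst) (t := univ) (fun d _ => mem_univ _) (fun d => g d.fst)]
  refine sum_congr rfl fun v _ => ?_
  rw [sum_congr rfl (g := fun _ => g v) (fun d hd => by
    rw [(mem_filter.1 hd).2]), sum_const, smul_eq_mul]
  congr 1
  exact G.dart_fst_fiber_card_eq_degree v

lemma cu_twice_M2 : 2 * zagrebM2 _ (cliqueUnion m) = ∑ i, m i * (m i - 1) ^ 3 := by
  unfold zagrebM2
  rw [← dart_sum]
  have step : ∀ d : (cliqueUnion m).Dart,
      Sym2.lift ⟨fun u v => (cliqueUnion m).degree u * (cliqueUnion m).degree v,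
        fun u v => mul_comm _ _⟩ d.edge = (m d.fst.1 - 1) ^ 2 := by
    intro d
    have : Sym2.lift ⟨fun u v => (cliqueUnion m).degree u * (cliqueUnion m).degree v,
        fun u v => mul_comm _ _⟩ d.edge
        = (cliqueUnion m).degree d.fst * (cliqueUnion m).degree d.snd := rfl
    rw [this, cu_degree, cu_degree]
    have hfs : d.fst.1 = d.snd.1 := d.adj.1
    rw [← hfs, sq]
  rw [sum_congr rfl fun d _ => step d,
    dart_fst_sum (cliqueUnion m) (fun v => (m v.1 - 1) ^ 2)]
  rw [sum_congr rfl (g := fun v : Σ i, Fin (m i) => (m v.1 - 1) ^ 3)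
    (fun v _ => by rw [cu_degree, ← pow_succ'])]
  exact sigma_sum_s18 m (fun i => (m i - 1) ^ 3)

end general

abbrev GLI (q : ℕ) : Type := Fin (q * (q + 1) / 2) ⊕ Fin (q * (q - 1) / 2) ⊕ Fin (q + 1)

abbrev GLsizes (q : ℕ) : GLI q → ℕ :=
  Sum.elim (fun _ => q ^ 2 - 3 * q + 2)
    (Sum.elim (fun _ => q ^ 2 - q) (fun _ => q ^ 2 - 2 * q + 1))

abbrev GLV (q : ℕ) : Type := Σ i : GLI q, Fin (GLsizes q i)

abbrev GLG (q : ℕ) : SimpleGraph (GLV q) := cliqueUnion (GLsizes q)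

theorem zagreb_commuting_GL2q (q : ℕ) (hq : 2 < q)
    (hpp : ∃ p k : ℕ, p.Prime ∧ 0 < k ∧ q = p ^ k) :
    (Fintype.card (GLV q) : ℚ) = ((q : ℚ) - 1) * ((q : ℚ) ^ 3 - q - 1) ∧
    ((GLG q).edgeFinset.card : ℚ)
      = ((q : ℚ) * ((q : ℚ) - 1) / 2)
          * ((q : ℚ) ^ 4 - 2 * (q : ℚ) ^ 3 - (q : ℚ) ^ 2 + 2 * (q : ℚ) + 1) ∧
    (zagrebM1 (GLV q) (GLG q) : ℚ)
      = (q : ℚ) * ((q : ℚ) - 1)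
          * ((q : ℚ) ^ 6 - 4 * (q : ℚ) ^ 5 + 4 * (q : ℚ) ^ 4 + 2 * (q : ℚ) ^ 3
              - 4 * (q : ℚ) ^ 2 + (q : ℚ) - 1) ∧
    (zagrebM2 (GLV q) (GLG q) : ℚ) / ((GLG q).edgeFinset.card : ℚ)
      > (zagrebM1 (GLV q) (GLG q) : ℚ) / (Fintype.card (GLV q) : ℚ) := by
  clear hpp
  have hq3 : 3 ≤ q := hq
  have hx : (3:ℚ) ≤ (q:ℚ) := by exact_mod_cast hq3
  have hy : (0:ℚ) ≤ (q:ℚ) - 3 := by linarith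
  have hc3 : ((q^2-3*q : ℕ):ℚ) = (q:ℚ)^2-3*(q:ℚ) := by
    rw [Nat.cast_sub (by nlinarith)]; push_cast; ring
  have hc1 : ((q^2-q : ℕ):ℚ) = (q:ℚ)^2-(q:ℚ) := by
    rw [Nat.cast_sub (by nlinarith)]; push_cast; ring
  have hc1' : ((q^2-q-1 : ℕ):ℚ) = (q:ℚ)^2-(q:ℚ)-1 := by
    rw [Nat.sub_sub, Nat.cast_sub (by nlinarith)]; push_cast; ring
  have hc2 : ((q^2-2*q : ℕ):ℚ) = (q:ℚ)^2-2*(q:ℚ) := by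
    rw [Nat.cast_sub (by nlinarith)]; push_cast; ring
  have hn1 : ((q*(q+1)/2 : ℕ):ℚ) = (q:ℚ)*((q:ℚ)+1)/2 := by
    rw [Nat.cast_div (Nat.even_mul_succ_self q).two_dvd (by norm_num)]; push_cast; ring
  have hn2 : ((q*(q-1)/2 : ℕ):ℚ) = (q:ℚ)*((q:ℚ)-1)/2 := by
    have hd : 2 ∣ q*(q-1) := by
      have h := (Nat.even_mul_succ_self (q-1)).two_dvd
      rwa [Nat.sub_add_cancel (by omega), Nat.mul_comm] at h
    rw [Nat.cast_div hd (by norm_num), Nat.cast_mul, Nat.cast_sub (by omega)]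
    push_cast; ring
  have hVnat : Fintype.card (GLV q) = q*(q+1)/2 * (q^2-3*q+2)
      + (q*(q-1)/2 * (q^2-q) + (q+1)*(q^2-2*q+1)) := by
    rw [cu_card]
    simp only [Fintype.sum_sum_type, Sum.elim_inl, Sum.elim_inr, Finset.sum_const,
      Finset.card_univ, Fintype.card_fin, smul_eq_mul]
  have hV : (Fintype.card (GLV q) : ℚ) = ((q : ℚ) - 1) * ((q : ℚ) ^ 3 - q - 1) := by
    have h := congrArg (Nat.cast (R := ℚ)) hVnat
    push_cast at h
    rw [hn1, hn2, hc3, hc1, hc2] at h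
    rw [h]; ring
  have hEnat : 2 * (GLG q).edgeFinset.card = q*(q+1)/2 * ((q^2-3*q+2) * (q^2-3*q+2-1))
      + (q*(q-1)/2 * ((q^2-q) * (q^2-q-1)) + (q+1)*((q^2-2*q+1) * (q^2-2*q+1-1))) := by
    rw [cu_twice_edges]
    simp only [Fintype.sum_sum_type, Sum.elim_inl, Sum.elim_inr, Finset.sum_const,
      Finset.card_univ, Fintype.card_fin, smul_eq_mul]
  have hE : 2 * (((GLG q).edgeFinset.card : ℕ):ℚ)
      = (q:ℚ)^6 - 3*(q:ℚ)^5 + (q:ℚ)^4 + 3*(q:ℚ)^3 - (q:ℚ)^2 - (q:ℚ) := by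
    have h := congrArg (Nat.cast (R := ℚ)) hEnat
    push_cast at h
    rw [hn1, hn2, hc3, hc1, hc1', hc2] at h
    rw [h]; ring
  have hM1nat : zagrebM1 (GLV q) (GLG q) = q*(q+1)/2 * ((q^2-3*q+2) * (q^2-3*q+2-1)^2)
      + (q*(q-1)/2 * ((q^2-q) * (q^2-q-1)^2) + (q+1)*((q^2-2*q+1) * (q^2-2*q+1-1)^2)) := by
    rw [cu_M1]
    simp only [Fintype.sum_sum_type, Sum.elim_inl, Sum.elim_inr, Finset.sum_const,
      Finset.card_univ, Fintype.card_fin, smul_eq_mul]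
  have hM1 : (zagrebM1 (GLV q) (GLG q) : ℚ)
      = (q : ℚ) * ((q : ℚ) - 1)
          * ((q : ℚ) ^ 6 - 4 * (q : ℚ) ^ 5 + 4 * (q : ℚ) ^ 4 + 2 * (q : ℚ) ^ 3
              - 4 * (q : ℚ) ^ 2 + (q : ℚ) - 1) := by
    have h := congrArg (Nat.cast (R := ℚ)) hM1nat
    push_cast at h
    rw [hn1, hn2, hc3, hc1, hc1', hc2] at h
    rw [h]; ring
  have hM2nat : 2 * zagrebM2 (GLV q) (GLG q) = q*(q+1)/2 * ((q^2-3*q+2) * (q^2-3*q+2-1)^3)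
      + (q*(q-1)/2 * ((q^2-q) * (q^2-q-1)^3) + (q+1)*((q^2-2*q+1) * (q^2-2*q+1-1)^3)) := by
    rw [cu_twice_M2]
    simp only [Fintype.sum_sum_type, Sum.elim_inl, Sum.elim_inr, Finset.sum_const,
      Finset.card_univ, Fintype.card_fin, smul_eq_mul]
  have hM2 : 2 * ((zagrebM2 (GLV q) (GLG q) : ℕ):ℚ)
      = (q:ℚ) - 10*(q:ℚ)^2 + 25*(q:ℚ)^3 - 28*(q:ℚ)^4 + 9*(q:ℚ)^5 + 18*(q:ℚ)^6
        - 29*(q:ℚ)^7 + 20*(q:ℚ)^8 - 7*(q:ℚ)^9 + (q:ℚ)^10 := by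
    have h := congrArg (Nat.cast (R := ℚ)) hM2nat
    push_cast at h
    rw [hn1, hn2, hc3, hc1, hc1', hc2] at h
    rw [h]; ring
  have hVpos : 0 < (Fintype.card (GLV q) : ℚ) := by
    have e : (Fintype.card (GLV q) : ℚ)
        = 46 + 75*((q:ℚ)-3) + 44*((q:ℚ)-3)^2 + 11*((q:ℚ)-3)^3 + ((q:ℚ)-3)^4 := by
      rw [hV]; ring
    rw [e]
    have h2 := pow_nonneg hy 2; have h3 := pow_nonneg hy 3; have h4 := pow_nonneg hy 4
    linarith
  have hEpos : 0 < (((GLG q).edgeFinset.card : ℕ):ℚ) := by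
    have e : 2 * (((GLG q).edgeFinset.card : ℕ):ℚ)
        = 150 + 425*((q:ℚ)-3) + 485*((q:ℚ)-3)^2 + 285*((q:ℚ)-3)^3 + 91*((q:ℚ)-3)^4
          + 15*((q:ℚ)-3)^5 + ((q:ℚ)-3)^6 := by rw [hE]; ring
    have h2 := pow_nonneg hy 2; have h3 := pow_nonneg hy 3; have h4 := pow_nonneg hy 4
    have h5 := pow_nonneg hy 5; have h6 := pow_nonneg hy 6
    linarith
  refine ⟨hV, by linear_combination hE / 2, hM1, ?_⟩
  rw [gt_iff_lt, div_lt_div_iff₀ hVpos hEpos]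
  have l1 : 2 * ((zagrebM1 (GLV q) (GLG q) : ℚ) * ((GLG q).edgeFinset.card : ℚ))
      = ((q : ℚ) * ((q : ℚ) - 1)
          * ((q : ℚ) ^ 6 - 4 * (q : ℚ) ^ 5 + 4 * (q : ℚ) ^ 4 + 2 * (q : ℚ) ^ 3
              - 4 * (q : ℚ) ^ 2 + (q : ℚ) - 1))
        * ((q:ℚ)^6 - 3*(q:ℚ)^5 + (q:ℚ)^4 + 3*(q:ℚ)^3 - (q:ℚ)^2 - (q:ℚ)) := by
    linear_combination (2 * ((GLG q).edgeFinset.card : ℚ)) * hM1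
      + ((q : ℚ) * ((q : ℚ) - 1)
          * ((q : ℚ) ^ 6 - 4 * (q : ℚ) ^ 5 + 4 * (q : ℚ) ^ 4 + 2 * (q : ℚ) ^ 3
              - 4 * (q : ℚ) ^ 2 + (q : ℚ) - 1)) * hE
  have l2 : 2 * ((zagrebM2 (GLV q) (GLG q) : ℚ) * (Fintype.card (GLV q) : ℚ))
      = ((q:ℚ) - 10*(q:ℚ)^2 + 25*(q:ℚ)^3 - 28*(q:ℚ)^4 + 9*(q:ℚ)^5 + 18*(q:ℚ)^6
        - 29*(q:ℚ)^7 + 20*(q:ℚ)^8 - 7*(q:ℚ)^9 + (q:ℚ)^10)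
        * (((q : ℚ) - 1) * ((q : ℚ) ^ 3 - q - 1)) := by
    linear_combination (Fintype.card (GLV q) : ℚ) * hM2
      + ((q:ℚ) - 10*(q:ℚ)^2 + 25*(q:ℚ)^3 - 28*(q:ℚ)^4 + 9*(q:ℚ)^5 + 18*(q:ℚ)^6
        - 29*(q:ℚ)^7 + 20*(q:ℚ)^8 - 7*(q:ℚ)^9 + (q:ℚ)^10) * hV
  have key : ((q:ℚ) - 10*(q:ℚ)^2 + 25*(q:ℚ)^3 - 28*(q:ℚ)^4 + 9*(q:ℚ)^5 + 18*(q:ℚ)^6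
        - 29*(q:ℚ)^7 + 20*(q:ℚ)^8 - 7*(q:ℚ)^9 + (q:ℚ)^10)
        * (((q : ℚ) - 1) * ((q : ℚ) ^ 3 - q - 1))
      - ((q : ℚ) * ((q : ℚ) - 1)
          * ((q : ℚ) ^ 6 - 4 * (q : ℚ) ^ 5 + 4 * (q : ℚ) ^ 4 + 2 * (q : ℚ) ^ 3
              - 4 * (q : ℚ) ^ 2 + (q : ℚ) - 1))
        * ((q:ℚ)^6 - 3*(q:ℚ)^5 + (q:ℚ)^4 + 3*(q:ℚ)^3 - (q:ℚ)^2 - (q:ℚ))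
      = 33024 + 191296*((q:ℚ)-3) + 499968*((q:ℚ)-3)^2 + 779600*((q:ℚ)-3)^3
        + 807968*((q:ℚ)-3)^4 + 586556*((q:ℚ)-3)^5 + 305984*((q:ℚ)-3)^6
        + 115623*((q:ℚ)-3)^7 + 31425*((q:ℚ)-3)^8 + 5994*((q:ℚ)-3)^9
        + 762*((q:ℚ)-3)^10 + 58*((q:ℚ)-3)^11 + 2*((q:ℚ)-3)^12 := by
    ring
  have h2 := pow_nonneg hy 2; have h3 := pow_nonneg hy 3; have h4 := pow_nonneg hy 4
  have h5 := pow_nonneg hy 5; have h6 := pow_nonneg hy 6; have h7 := pow_nonneg hy 7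
  have h8 := pow_nonneg hy 8; have h9 := pow_nonneg hy 9; have h10 := pow_nonneg hy 10
  have h11 := pow_nonneg hy 11; have h12 := pow_nonneg hy 12
  linarith [l1, l2, key]
end
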